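/- Let v ∈ ℕ and let a_1, …, a_m be pairwise coprime divisors of v (m ≥ 2). Then for any natural numbers μ_1, …, μ_m with 1 ≤ μ_i ≤ a_i, there exists a non-disjoint (v, m, μ_1·v/a_1, …, μ_m·v/a_m)-GPSEDF in ℤ_v. -/

import Mathlib

/-!
Take `Aᵢ` to be the set of residues mod `v` whose reduction mod `aᵢ` lies in `{0, …, μᵢ - 1}`:
a union of `μᵢ` cosets of `Hᵢ = aᵢℤ_v`, so `|Aᵢ| = μᵢ v / aᵢ`. If `A` is `H`-periodic and `B` is
`K`-periodic, then `(x, y) ↦ (x + h, y - k)` shows that the number of representations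
`t = x - y` with `x ∈ A`, `y ∈ B` only depends on `t` modulo `H + K`. For coprime `aᵢ, aⱼ`, Bézout
gives `Hᵢ + Hⱼ = ℤ_v`, so `Δ(Aᵢ, Aⱼ)` covers every element equally often.
-/

open Finset

/-- The external difference multiset `Δ(A,B) = {a - b : a ∈ A, b ∈ B}` (with multiplicity). -/
def extDiff {G : Type*} [AddGroup G] (A B : Finset G) : Multiset G :=
  A.val.bind fun a => B.val.map fun b => a - b

section ExternalDifference

variable {G : Type*} [AddCommGroup G]

lemma extDiff_eq_map (A B : Finset G) :
    extDiff A B = (A ×ˢ B).val.map fun p => p.1 - p.2 := by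
  rw [extDiff, product_val]
  simp only [SProd.sprod, Multiset.product, Multiset.map_bind, Multiset.map_map,
    Function.comp_def]

lemma card_extDiff (A B : Finset G) : Multiset.card (extDiff A B) = #A * #B := by
  rw [extDiff_eq_map, Multiset.card_map, card_val, card_product]

lemma count_extDiff [DecidableEq G] (A B : Finset G) (t : G) :
    (extDiff A B).count t = #{p ∈ A ×ˢ B | p.1 - p.2 = t} := by
  rw [extDiff_eq_map, Multiset.count_map, ← card_val, filter_val]
  simp_rw [eq_comm]

lemma count_extDiff_eq_of_periodic [DecidableEq G] {H K : AddSubgroup G} (hHK : H ⊔ K = ⊤)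
    {A B : Finset G} (hA : ∀ a ∈ A, ∀ h ∈ H, a + h ∈ A) (hB : ∀ b ∈ B, ∀ k ∈ K, b + k ∈ B)
    (s t : G) :
    (extDiff A B).count s = (extDiff A B).count t := by
  obtain ⟨h, hH, k, hK, hhk⟩ := AddSubgroup.mem_sup.mp (hHK ▸ AddSubgroup.mem_top (t - s))
  obtain rfl : t = s + (h + k) := by rw [hhk]; abel
  rw [count_extDiff, count_extDiff]
  refine card_nbij' (fun p => (p.1 + h, p.2 - k)) (fun p => (p.1 - h, p.2 + k)) ?_ ?_ ?_ ?_
  · intro p hp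
    simp only [mem_coe, mem_filter, mem_product] at hp ⊢
    refine ⟨⟨hA _ hp.1.1 h hH, ?_⟩, ?_⟩
    · simpa [sub_eq_add_neg] using hB _ hp.1.2 (-k) (K.neg_mem hK)
    · rw [show p.1 + h - (p.2 - k) = p.1 - p.2 + (h + k) by abel, hp.2]
  · intro p hp
    simp only [mem_coe, mem_filter, mem_product] at hp ⊢
    refine ⟨⟨?_, hB _ hp.1.2 k hK⟩, ?_⟩
    · simpa [sub_eq_add_neg] using hA _ hp.1.1 (-h) (H.neg_mem hH)
    · rw [show p.1 - h - (p.2 + k) = p.1 - p.2 - (h + k) by abel, hp.2, add_sub_cancel_right]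
  · intro p _; simp
  · intro p _; simp

theorem exists_extDiff_eq_nsmul_univ [Fintype G] [DecidableEq G] {H K : AddSubgroup G}
    (hHK : H ⊔ K = ⊤) {A B : Finset G} (hA : ∀ a ∈ A, ∀ h ∈ H, a + h ∈ A)
    (hB : ∀ b ∈ B, ∀ k ∈ K, b + k ∈ B) :
    ∃ lam : ℕ, lam * Fintype.card G = #A * #B ∧ extDiff A B = lam • (univ : Finset G).val := by
  set lam := (extDiff A B).count 0
  have hext : extDiff A B = lam • (univ : Finset G).val := by
    ext t
    rw [Multiset.count_nsmul, Multiset.count_univ, mul_one,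
      count_extDiff_eq_of_periodic hHK hA hB t 0]
  refine ⟨lam, ?_, hext⟩
  rw [← card_extDiff, hext, Multiset.card_nsmul, card_val, card_univ]

end ExternalDifference

lemma card_filter_mem_mul_card_of_surjective {G Q F : Type*} [AddGroup G] [Fintype G]
    [AddGroup Q] [Fintype Q] [DecidableEq Q] [FunLike F G Q] [AddMonoidHomClass F G Q] (f : F)
    (hf : Function.Surjective f) (S : Finset Q) :
    #{x | f x ∈ S} * Fintype.card Q = #S * Fintype.card G := by
  have hfiber (q : Q) : #{x | f x = q} = #{x | f x = 0} :=
    AddMonoidHom.card_fiber_eq_of_mem_range f (hf q) (hf 0)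
  have hcard (T : Finset Q) : #{x | f x ∈ T} = #T * #{x | f x = 0} := by
    rw [← sum_card_fiberwise_eq_card_filter, sum_const_nat fun q _ => hfiber q]
  have hG : Fintype.card G = Fintype.card Q * #{x | f x = 0} := by simpa using hcard univ
  rw [hcard, hG]
  ring

namespace ZMod

lemma card_filter_val_lt {a μ : ℕ} [NeZero a] (hμ : μ ≤ a) : #{s : ZMod a | s.val < μ} = μ := by
  rw [← card_range μ]
  refine card_nbij' val (fun n => (n : ZMod a)) ?_ ?_ ?_ ?_
  · intro s hs
    simpa using hs
  · intro n hn
    simp only [coe_range, Set.mem_Iio] at hn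
    simpa [val_cast_of_lt (hn.trans_le hμ)] using hn
  · intro s _
    exact natCast_zmod_val s
  · intro n hn
    simp only [coe_range, Set.mem_Iio] at hn
    exact val_cast_of_lt (hn.trans_le hμ)

lemma card_filter_castHom_val_lt {v a μ : ℕ} [NeZero v] (ha : a ∣ v) (hμ : μ ≤ a) :
    #{x : ZMod v | (castHom ha (ZMod a) x).val < μ} = μ * (v / a) := by
  have ha₀ : 0 < a := Nat.pos_of_dvd_of_pos ha (Nat.pos_of_neZero v)
  have : NeZero a := ⟨ha₀.ne'⟩
  have key := card_filter_mem_mul_card_of_surjective (castHom ha (ZMod a)) (castHom_surjective ha)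
    {s : ZMod a | s.val < μ}
  simp only [mem_filter, mem_univ, true_and, card_filter_val_lt hμ, card] at key
  refine Nat.eq_of_mul_eq_mul_right ha₀ ?_
  rw [key, mul_assoc, Nat.div_mul_cancel ha]

lemma ker_castHom_sup_ker_castHom {v a b : ℕ} (ha : a ∣ v) (hb : b ∣ v) (hab : a.Coprime b) :
    (castHom ha (ZMod a) : ZMod v →+ ZMod a).ker ⊔ (castHom hb (ZMod b) : ZMod v →+ ZMod b).ker
      = ⊤ := by
  obtain ⟨u, w, huw⟩ := (Nat.isCoprime_iff_coprime.mpr hab).intCast (R := ZMod v)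
  simp only [Int.cast_natCast] at huw
  refine eq_top_iff.mpr fun t _ => AddSubgroup.mem_sup.mpr
    ⟨t * u * a, ?_, t * w * b, ?_, by linear_combination t * huw⟩
  · change castHom ha (ZMod a) (t * u * a) = 0
    rw [map_mul, map_natCast, natCast_self, mul_zero]
  · change castHom hb (ZMod b) (t * w * b) = 0
    rw [map_mul, map_natCast, natCast_self, mul_zero]

end ZMod

theorem stmt_13_general (v m : ℕ) (hv : 0 < v) (a : Fin m → ℕ)
    (hdvd : ∀ i, a i ∣ v) (hcop : ∀ i j, i ≠ j → Nat.Coprime (a i) (a j))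
    (μ : Fin m → ℕ) (hμ₂ : ∀ i, μ i ≤ a i) :
    haveI : NeZero v := ⟨hv.ne'⟩
    ∃ A : Fin m → Finset (ZMod v),
      (∀ i, (A i).card = μ i * (v / a i)) ∧
      ∀ i j, i ≠ j → ∃ lam : ℕ,
        lam * v = (μ i * (v / a i)) * (μ j * (v / a j)) ∧
        extDiff (A i) (A j) = lam • (Finset.univ : Finset (ZMod v)).val := by
  have : NeZero v := ⟨hv.ne'⟩
  let π i : ZMod v →+* ZMod (a i) := ZMod.castHom (hdvd i) (ZMod (a i))
  have hcard i : #{x : ZMod v | (π i x).val < μ i} = μ i * (v / a i) :=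
    ZMod.card_filter_castHom_val_lt (hdvd i) (hμ₂ i)
  have hperiodic i : ∀ x ∈ ({x | (π i x).val < μ i} : Finset (ZMod v)),
      ∀ h ∈ (π i : ZMod v →+ ZMod (a i)).ker, x + h ∈ ({x | (π i x).val < μ i} : Finset _) := by
    intro x hx h (hh : π i h = 0)
    simpa [map_add, hh] using hx
  refine ⟨fun i => {x | (π i x).val < μ i}, hcard, fun i j hij => ?_⟩
  obtain ⟨lam, hlam, hext⟩ := exists_extDiff_eq_nsmul_univ
    (ZMod.ker_castHom_sup_ker_castHom (hdvd i) (hdvd j) (hcop i j hij)) (hperiodic i) (hperiodic j)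
  rw [ZMod.card, hcard, hcard] at hlam
  exact ⟨lam, hlam, hext⟩

/-- let `a₁,…,a_m` (`m ≥ 2`) be pairwise coprime divisors of `v`.  For any
`1 ≤ μᵢ ≤ aᵢ` there exists a non-disjoint `(v, m, μ₁·v/a₁, …, μ_m·v/a_m)`-GPSEDF
in `ℤ_v`. -/
theorem stmt_13 (v m : ℕ) (hv : 0 < v) (hm : 2 ≤ m) (a : Fin m → ℕ)
    (hdvd : ∀ i, a i ∣ v) (hcop : ∀ i j, i ≠ j → Nat.Coprime (a i) (a j))
    (μ : Fin m → ℕ) (hμ₁ : ∀ i, 1 ≤ μ i) (hμ₂ : ∀ i, μ i ≤ a i) :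
    haveI : NeZero v := ⟨hv.ne'⟩
    ∃ A : Fin m → Finset (ZMod v),
      (∀ i, (A i).card = μ i * (v / a i)) ∧
      ∀ i j, i ≠ j → ∃ lam : ℕ,
        lam * v = (μ i * (v / a i)) * (μ j * (v / a j)) ∧
        extDiff (A i) (A j) = lam • (Finset.univ : Finset (ZMod v)).val :=
  stmt_13_general v m hv a hdvd hcop μ hμ₂
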